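/- Assume Vtilde_{J-1} = Vtilde_J = V_inf. Then for all mesh functions PsiT, PsiB, W : {0,...,J} x {0,...,K} -> C with W_{0,k} = 0 for all k, writing D = (PsiT - PsiB)/tau and S = (PsiT + PsiB)/2, the following summation-by-parts identity holds: (i*hbar*s_N D + c_h*Delta_{hN} S - s_N(Vtilde.S), W)_{omega_h} - ((D_xh(PsiT,PsiB))_J, W_J)_{omega_hy} = (i*hbar*D - Vtilde.S, W)_{omegaT_h, s_N} - c_h*(s_{Ny} dbar_x S, dbar_x W)_{omegaT_h} + c_h*(d_y dbar_y S, W)_{omegaT_h, s_{Nx}}. -/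

import Mathlib

noncomputable section

/-- Backward difference quotient in `x`: `(∂̄_x W)_{j,k} = (W_{j,k} - W_{j-1,k})/h_x`. -/
def dbx (hx : ℝ) (W : ℕ → ℕ → ℂ) : ℕ → ℕ → ℂ := fun j k => (W j k - W (j - 1) k) / (hx : ℂ)

/-- Second difference quotient in `x`. -/
def ddxF (hx : ℝ) (W : ℕ → ℕ → ℂ) : ℕ → ℕ → ℂ := fun j k =>
  (W (j + 1) k - 2 * W j k + W (j - 1) k) / (hx : ℂ) ^ 2

/-- Second difference quotient in `y`. -/
def ddyF (hy : ℝ) (W : ℕ → ℕ → ℂ) : ℕ → ℕ → ℂ := fun j k =>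
  (W j (k + 1) - 2 * W j k + W j (k - 1)) / (hy : ℂ) ^ 2

/-- `s_{Nx} = I + (h_x²/12) ∂_x ∂̄_x`. -/
def sNxF (hx : ℝ) (W : ℕ → ℕ → ℂ) : ℕ → ℕ → ℂ := fun j k =>
  W j k + ((hx ^ 2 / 12 : ℝ) : ℂ) * ddxF hx W j k

/-- `s_{Ny} = I + (h_y²/12) ∂_y ∂̄_y`. -/
def sNyF (hy : ℝ) (W : ℕ → ℕ → ℂ) : ℕ → ℕ → ℂ := fun j k =>
  W j k + ((hy ^ 2 / 12 : ℝ) : ℂ) * ddyF hy W j k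

/-- `s_N = I + (h_x²/12) ∂_x ∂̄_x + (h_y²/12) ∂_y ∂̄_y`. -/
def sNF (hx hy : ℝ) (W : ℕ → ℕ → ℂ) : ℕ → ℕ → ℂ := fun j k =>
  W j k + ((hx ^ 2 / 12 : ℝ) : ℂ) * ddxF hx W j k + ((hy ^ 2 / 12 : ℝ) : ℂ) * ddyF hy W j k

/-- `Δ_{hN} = s_{Ny} ∂_x ∂̄_x + s_{Nx} ∂_y ∂̄_y`. -/
def dHNF (hx hy : ℝ) (W : ℕ → ℕ → ℂ) : ℕ → ℕ → ℂ := fun j k =>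
  sNyF hy (ddxF hx W) j k + sNxF hx (ddyF hy W) j k

/-- `(s_{Nx}^- W)_{j,k} = (1/12) W_{j-1,k} + (5/12) W_{j,k}`. -/
def sNxm (W : ℕ → ℕ → ℂ) : ℕ → ℕ → ℂ := fun j k =>
  (1 / 12 : ℂ) * W (j - 1) k + (5 / 12 : ℂ) * W j k

/-- `(s_N^- W)_{j,k} = (s_{Nx}^- W)_{j,k} + (h_y²/24)(∂_y ∂̄_y W)_{j,k}`. -/
def sNm (hy : ℝ) (W : ℕ → ℕ → ℂ) : ℕ → ℕ → ℂ := fun j k =>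
  sNxm W j k + ((hy ^ 2 / 24 : ℝ) : ℂ) * ddyF hy W j k

/-- `(U,W)_{ω_h} = ∑_{j=1}^{J-1} ∑_{k=1}^{K-1} U_{j,k} conj(W_{j,k}) h_x h_y`. -/
def innO (J K : ℕ) (hx hy : ℝ) (U W : ℕ → ℕ → ℂ) : ℂ :=
  ∑ j ∈ Finset.Icc 1 (J - 1), ∑ k ∈ Finset.Icc 1 (K - 1),
    U j k * (starRingEnd ℂ) (W j k) * ((hx * hy : ℝ) : ℂ)

/-- `(U,W)_{ω̃_h} = ∑_{j=1}^{J} ∑_{k=1}^{K-1} U_{j,k} conj(W_{j,k}) h_x h_y`. -/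
def innT (J K : ℕ) (hx hy : ℝ) (U W : ℕ → ℕ → ℂ) : ℂ :=
  ∑ j ∈ Finset.Icc 1 J, ∑ k ∈ Finset.Icc 1 (K - 1),
    U j k * (starRingEnd ℂ) (W j k) * ((hx * hy : ℝ) : ℂ)

/-- `(Z,Z')_{ω_{hy}} = ∑_{k=1}^{K-1} Z_k conj(Z'_k) h_y`. -/
def innY (K : ℕ) (hy : ℝ) (Z Z' : ℕ → ℂ) : ℂ :=
  ∑ k ∈ Finset.Icc 1 (K - 1), Z k * (starRingEnd ℂ) (Z' k) * ((hy : ℝ) : ℂ)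

/-- `(U,W)_{ω̃_h, s_N} = (s_N U, W)_{ω_h} + ((s_N^- U)_J, W_J)_{ω_{hy}} h_x`. -/
def innSN (J K : ℕ) (hx hy : ℝ) (U W : ℕ → ℕ → ℂ) : ℂ :=
  innO J K hx hy (sNF hx hy U) W
    + innY K hy (fun k => sNm hy U J k) (fun k => W J k) * ((hx : ℝ) : ℂ)

/-- `(U,W)_{ω̃_h, s_{Nx}} = (s_{Nx} U, W)_{ω_h} + ((s_{Nx}^- U)_J, W_J)_{ω_{hy}} h_x`. -/
def innSNx (J K : ℕ) (hx hy : ℝ) (U W : ℕ → ℕ → ℂ) : ℂ :=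
  innO J K hx hy (sNxF hx U) W
    + innY K hy (fun k => sNxm U J k) (fun k => W J k) * ((hx : ℝ) : ℂ)

/-!
Since `s_{Ny}` commutes with differences in `x`, `s_{Ny} ∂_x ∂̄_x S` is the forward difference
quotient of `G = s_{Ny} ∂̄_x S`, and Abel summation in `j` (with `W_0 = 0`) turns its pairing
with `W` over `ω_h` into the boundary pairing `(G_J, W_J)_{ω_hy}` minus `(G, ∂̄_x W)_{ω̃_h}`.
Everything else matches by linearity; `D_{xh}` sees `Ṽ` only at `j = J - 1, J`, where it is `V_∞`.
-/

open Finset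

theorem Finset.sum_Icc_one_by_parts {R : Type*} [CommRing R] (G w : ℕ → R) (hw : w 0 = 0) (n : ℕ) :
    ∑ j ∈ Icc 1 n, (G (j + 1) - G j) * w j
      = G (n + 1) * w (n + 1) - ∑ j ∈ Icc 1 (n + 1), G j * (w j - w (j - 1)) := by
  induction n with
  | zero => simp [hw]
  | succ n ih =>
    rw [sum_Icc_succ_top (by omega), ih, sum_Icc_succ_top (b := n + 1) (by omega)]
    simp only [Nat.add_sub_cancel]
    ring

theorem Finset.sum_Icc_one_pred_by_parts {R : Type*} [CommRing R] (G w : ℕ → R) (hw : w 0 = 0)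
    (J : ℕ) :
    ∑ j ∈ Icc 1 (J - 1), (G (j + 1) - G j) * w j
      = G J * w J - ∑ j ∈ Icc 1 J, G j * (w j - w (j - 1)) := by
  cases J with
  | zero => simp [hw]
  | succ n => exact sum_Icc_one_by_parts G w hw n

/-- The paper's forward difference quotient `∂_x`. -/
def dfx (hx : ℝ) (W : ℕ → ℕ → ℂ) : ℕ → ℕ → ℂ := fun j k => (W (j + 1) k - W j k) / (hx : ℂ)

theorem sNyF_ddxF (hx hy : ℝ) (W : ℕ → ℕ → ℂ) :
    sNyF hy (ddxF hx W) = dfx hx (sNyF hy (dbx hx W)) := by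
  funext j k
  simp only [sNyF, ddxF, ddyF, dfx, dbx, Nat.add_sub_cancel]
  ring

theorem sNm_congr {hy : ℝ} {U U' : ℕ → ℕ → ℂ} {J : ℕ} (h₁ : U (J - 1) = U' (J - 1))
    (h₂ : U J = U' J) (k : ℕ) : sNm hy U J k = sNm hy U' J k := by
  simp only [sNm, sNxm, ddyF, h₁, h₂]

section Linearity

variable (J K : ℕ) (hx hy : ℝ) (c : ℂ) (U V W : ℕ → ℕ → ℂ) (Z Z' Y : ℕ → ℂ)

theorem innO_add_left :
    innO J K hx hy (fun j k => U j k + V j k) W = innO J K hx hy U W + innO J K hx hy V W := by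
  simp only [innO, add_mul, sum_add_distrib]

theorem innO_const_mul_left :
    innO J K hx hy (fun j k => c * U j k) W = c * innO J K hx hy U W := by
  simp only [innO, mul_sum, mul_assoc]

theorem innY_sub_left :
    innY K hy (fun k => Z k - Z' k) Y = innY K hy Z Y - innY K hy Z' Y := by
  simp only [innY, sub_mul, sum_sub_distrib]

theorem innY_const_mul_left :
    innY K hy (fun k => c * Z k) Y = c * innY K hy Z Y := by
  simp only [innY, mul_sum, mul_assoc]

end Linearity

theorem innO_dfx_left (J K : ℕ) {hx : ℝ} (hx0 : (hx : ℂ) ≠ 0) (hy : ℝ) (G W : ℕ → ℕ → ℂ)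
    (hW0 : ∀ k, W 0 k = 0) :
    innO J K hx hy (dfx hx G) W
      = innY K hy (fun k => G J k) (fun k => W J k) - innT J K hx hy G (dbx hx W) := by
  simp only [innO, innT, innY, dfx, dbx]
  rw [sum_comm, sum_comm (s := Icc 1 J), ← sum_sub_distrib]
  refine sum_congr rfl fun k _ => ?_
  have abel := sum_Icc_one_pred_by_parts (G · k) (fun j => starRingEnd ℂ (W j k)) (by simp [hW0]) J
  calc ∑ j ∈ Icc 1 (J - 1), (G (j + 1) k - G j k) / hx * starRingEnd ℂ (W j k) * ↑(hx * hy)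
      = (∑ j ∈ Icc 1 (J - 1), (G (j + 1) k - G j k) * starRingEnd ℂ (W j k)) * hy := by
        rw [sum_mul]
        refine sum_congr rfl fun j _ => ?_
        push_cast
        field_simp
    _ = G J k * starRingEnd ℂ (W J k) * hy
          - ∑ j ∈ Icc 1 J, G j k * starRingEnd ℂ ((W j k - W (j - 1) k) / hx) * ↑(hx * hy) := by
        rw [abel, sub_mul, sum_mul]
        congr 1
        refine sum_congr rfl fun j _ => ?_
        simp only [map_div₀, map_sub, Complex.conj_ofReal]
        push_cast
        field_simp

theorem stmt14_general (J K : ℕ)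
    (hx hy hbar ch tau Vinf : ℝ)
    (hhx : 0 < hx)
    (Vt : ℕ → ℝ) (hV1 : Vt (J - 1) = Vinf) (hV2 : Vt J = Vinf)
    (PsiT PsiB W : ℕ → ℕ → ℂ) (hW0 : ∀ k, W 0 k = 0) :
    let D : ℕ → ℕ → ℂ := fun j k => (PsiT j k - PsiB j k) / ((tau : ℝ) : ℂ)
    let S : ℕ → ℕ → ℂ := fun j k => (PsiT j k + PsiB j k) / 2
    let Dxh : ℕ → ℂ := fun k =>
      (ch : ℂ) * sNyF hy (dbx hx S) J k
        - (hx : ℂ) * sNm hy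
            (fun j' k' => Complex.I * (hbar : ℂ) * D j' k' - (Vinf : ℂ) * S j' k') J k
        - (hx : ℂ) * (ch : ℂ) * sNxm (ddyF hy S) J k
    innO J K hx hy
        (fun j k => Complex.I * (hbar : ℂ) * sNF hx hy D j k
          + (ch : ℂ) * dHNF hx hy S j k
          - sNF hx hy (fun j' k' => (Vt j' : ℂ) * S j' k') j k) W
      - innY K hy Dxh (fun k => W J k)
    = innSN J K hx hy
        (fun j k => Complex.I * (hbar : ℂ) * D j k - (Vt j : ℂ) * S j k) W
      - (ch : ℂ) * innT J K hx hy (sNyF hy (dbx hx S)) (dbx hx W)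
      + (ch : ℂ) * innSNx J K hx hy (ddyF hy S) W := by
  intro D S Dxh
  set U : ℕ → ℕ → ℂ := fun j k => Complex.I * (hbar : ℂ) * D j k - (Vt j : ℂ) * S j k
  have hinterior : (fun j k => Complex.I * (hbar : ℂ) * sNF hx hy D j k
        + (ch : ℂ) * dHNF hx hy S j k - sNF hx hy (fun j' k' => (Vt j' : ℂ) * S j' k') j k)
      = fun j k => sNF hx hy U j k + (ch : ℂ) * dfx hx (sNyF hy (dbx hx S)) j k
        + (ch : ℂ) * sNxF hx (ddyF hy S) j k := by
    funext j k
    simp only [dHNF, sNyF_ddxF]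
    simp only [U, sNF, ddxF, ddyF]
    ring
  have hboundary : Dxh = fun k => (ch : ℂ) * sNyF hy (dbx hx S) J k
      - (hx : ℂ) * sNm hy U J k - (hx : ℂ) * (ch : ℂ) * sNxm (ddyF hy S) J k := by
    funext k
    simp only [Dxh]
    rw [sNm_congr (U' := U) (by simp only [U, hV1]) (by simp only [U, hV2])]
  have hx0 : (hx : ℂ) ≠ 0 := Complex.ofReal_ne_zero.mpr hhx.ne'
  rw [hinterior, hboundary]
  simp only [innSN, innSNx, innO_add_left, innO_const_mul_left, innY_sub_left,
    innY_const_mul_left, innO_dfx_left J K hx0 hy _ W hW0]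
  ring

/-- the summation-by-parts identity coupling the main equation's operators
and the boundary operator `D_{xh}` at `j = J`, for any mesh functions `Ψ̃ = PsiT`,
`Ψ̆ = PsiB` and any `W` vanishing at `j = 0`, with `D = (Ψ̃-Ψ̆)/τ`, `S = (Ψ̃+Ψ̆)/2`. -/
theorem stmt14 (J K : ℕ) (hJ : 2 ≤ J) (hK : 2 ≤ K)
    (hx hy hbar ch tau Vinf : ℝ)
    (hhx : 0 < hx) (hhy : 0 < hy) (hhbar : 0 < hbar) (hch : 0 < ch) (htau : 0 < tau)
    (Vt : ℕ → ℝ) (hV1 : Vt (J - 1) = Vinf) (hV2 : Vt J = Vinf)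
    (PsiT PsiB W : ℕ → ℕ → ℂ) (hW0 : ∀ k, W 0 k = 0) :
    let D : ℕ → ℕ → ℂ := fun j k => (PsiT j k - PsiB j k) / ((tau : ℝ) : ℂ)
    let S : ℕ → ℕ → ℂ := fun j k => (PsiT j k + PsiB j k) / 2
    let Dxh : ℕ → ℂ := fun k =>
      (ch : ℂ) * sNyF hy (dbx hx S) J k
        - (hx : ℂ) * sNm hy
            (fun j' k' => Complex.I * (hbar : ℂ) * D j' k' - (Vinf : ℂ) * S j' k') J k
        - (hx : ℂ) * (ch : ℂ) * sNxm (ddyF hy S) J k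
    innO J K hx hy
        (fun j k => Complex.I * (hbar : ℂ) * sNF hx hy D j k
          + (ch : ℂ) * dHNF hx hy S j k
          - sNF hx hy (fun j' k' => (Vt j' : ℂ) * S j' k') j k) W
      - innY K hy Dxh (fun k => W J k)
    = innSN J K hx hy
        (fun j k => Complex.I * (hbar : ℂ) * D j k - (Vt j : ℂ) * S j k) W
      - (ch : ℂ) * innT J K hx hy (sNyF hy (dbx hx S)) (dbx hx W)
      + (ch : ℂ) * innSNx J K hx hy (ddyF hy S) W :=
  stmt14_general J K hx hy hbar ch tau Vinf hhx Vt hV1 hV2 PsiT PsiB W hW0
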